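/- arXiv:2203.02829 — 5 statements merged into one kernel-verified Lean document; each statement's English description precedes it below -/
import Mathlib

section
/- Let H(x,y) = y²/2 + x²/2 + x⁴/4. Then the 1-form y³ dx satisfies the relative decomposition y³ dx = (12/7·H − 3/7·x²)·y dx − (3/7)·x y dH + d((1/7)·x y³), i.e. the difference of the two sides is the zero 1-form on ℝ², where dH = H_x dx + H_y dy. -/
/-- partial derivative in the first variable -/
noncomputable def pdx (F : ℝ → ℝ → ℝ) (x y : ℝ) : ℝ := deriv (fun t => F t y) x

/-- partial derivative in the second variable -/
noncomputable def pdy (F : ℝ → ℝ → ℝ) (x y : ℝ) : ℝ := deriv (fun t => F x t) y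

/-- global center Hamiltonian -/
noncomputable def H (x y : ℝ) : ℝ := y^2/2 + x^2/2 + x^4/4

theorem pdx_eq_of_hasDerivAt {F : ℝ → ℝ → ℝ} {x y f' : ℝ}
    (h : HasDerivAt (fun t => F t y) f' x) : pdx F x y = f' :=
  h.deriv

theorem pdy_eq_of_hasDerivAt {F : ℝ → ℝ → ℝ} {x y f' : ℝ}
    (h : HasDerivAt (fun t => F x t) f' y) : pdy F x y = f' :=
  h.deriv

theorem pdx_H (x y : ℝ) : pdx H x y = x + x^3 :=
  pdx_eq_of_hasDerivAt <|
    (((hasDerivAt_const x (y^2/2)).add ((hasDerivAt_pow 2 x).div_const 2)).add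
      ((hasDerivAt_pow 4 x).div_const 4)).congr_deriv (by norm_num)

theorem pdy_H (x y : ℝ) : pdy H x y = y :=
  pdy_eq_of_hasDerivAt <|
    ((((hasDerivAt_pow 2 y).div_const 2).add_const (x^2/2)).add_const (x^4/4)).congr_deriv
      (by norm_num)

theorem pdx_const_mul_mul_pow (c : ℝ) (n : ℕ) (x y : ℝ) :
    pdx (fun x y => c * x * y^n) x y = c * y^n :=
  pdx_eq_of_hasDerivAt <| by
    simpa using ((hasDerivAt_id x).const_mul c).mul_const (y^n)

theorem pdy_const_mul_mul_pow (c : ℝ) (n : ℕ) (x y : ℝ) :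
    pdy (fun x y => c * x * y^n) x y = c * x * (n * y^(n-1)) :=
  pdy_eq_of_hasDerivAt <| (hasDerivAt_pow n y).const_mul (c * x)

/-- (i1):  y³dx = (12/7·H − 3/7·x²)·y dx − (3/7)·xy·dH + d((1/7)·xy³) -/
theorem decomposition_i1 : ∀ x y : ℝ,
    y^3 = (12/7 * H x y - 3/7 * x^2) * y - 3/7 * (x*y) * pdx H x y
      + pdx (fun x y => 1/7 * x * y^3) x y
  ∧ (0 : ℝ) = - (3/7) * (x*y) * pdy H x y + pdy (fun x y => 1/7 * x * y^3) x y := by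
  intro x y
  rw [pdx_H, pdy_H, pdx_const_mul_mul_pow, pdy_const_mul_mul_pow, H]
  constructor
  · ring
  · push_cast
    ring
end

section
/- Let H(x,y) = y²/2 + x²/2 + x⁴/4. Then x² y³ dx = (4/3·H·x² + 8/21·x² − 4/21·H)·y dx − (2/7·x y + 1/3·x³ y)·dH + d(1/9·x³y³ + 2/21·x y³) as polynomial 1-forms on ℝ². -/
theorem pdx_potential (x y : ℝ) :
    pdx (fun x y => 1/9 * x^3 * y^3 + 2/21 * x * y^3) x y = (1/3 * x^2 + 2/21) * y^3 :=
  ((((hasDerivAt_pow 3 x).const_mul (1/9)).mul_const (y^3)).add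
    (((hasDerivAt_id x).const_mul (2/21)).mul_const (y^3))).deriv.trans (by norm_num; ring)

theorem pdy_potential (x y : ℝ) :
    pdy (fun x y => 1/9 * x^3 * y^3 + 2/21 * x * y^3) x y = (1/3 * x^3 + 2/7 * x) * y^2 :=
  (((hasDerivAt_pow 3 y).const_mul (1/9 * x^3)).add
    ((hasDerivAt_pow 3 y).const_mul (2/21 * x))).deriv.trans (by norm_num; ring)

/-- (i5):  x²y³ dx = (4/3·H·x² + 8/21·x² − 4/21·H)·y dx − (2/7·xy + 1/3·x³y)·dH
    + d(1/9·x³y³ + 2/21·xy³) -/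
theorem decomposition_i5 : ∀ x y : ℝ,
    x^2 * y^3 = (4/3 * H x y * x^2 + 8/21 * x^2 - 4/21 * H x y) * y
      - (2/7 * x * y + 1/3 * x^3 * y) * pdx H x y
      + pdx (fun x y => 1/9 * x^3 * y^3 + 2/21 * x * y^3) x y
  ∧ (0 : ℝ) = - (2/7 * x * y + 1/3 * x^3 * y) * pdy H x y
      + pdy (fun x y => 1/9 * x^3 * y^3 + 2/21 * x * y^3) x y := by
  intro x y
  rw [pdx_H, pdy_H, pdx_potential, pdy_potential, H]
  constructor <;> ring
end

section
/- Let H(x,y) = y²/2 + x²/2 + x⁴/4 and let k be a natural number. Then xᵏ y⁴ dx = −(8H/(k+1)·xᵏ⁺¹ − 4/(k+3)·xᵏ⁺³ − 2/(k+5)·xᵏ⁺⁵)·dH + d( xᵏ⁺¹·( 4H²/(k+1) − 4H/(k+3)·x² + (1−2H)/(k+5)·x⁴ + 1/(k+7)·x⁶ + 1/(4(k+9))·x⁸ ) ) as polynomial 1-forms on ℝ². -/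
/-!
Write the primitive as `Φ(x, H)` with `Φ = i9Primitive k`, a polynomial in `x` and an
independent variable `h`. Its `h`-derivative is exactly the cofactor `i9Cofactor k` of `dH`, so
`d(Φ(x, H)) = ∂ₓΦ(x, H) dx + cofactor · dH`, and the identity reduces to `∂ₓΦ(x, H) = xᵏ y⁴`.
Each denominator `k + 1 + 2j` cancels against the exponent of `x^(k+1+2j)`, leaving
`∂ₓΦ(x, h) = xᵏ (2h - x² - x⁴/2)²`, and `2H - x² - x⁴/2 = y²`.
-/

lemma hasDerivAt_H_fst (x y : ℝ) : HasDerivAt (fun t => H t y) (x + x ^ 3) x :=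
  ((((hasDerivAt_pow 2 x).div_const 2).const_add (y ^ 2 / 2)).add
    ((hasDerivAt_pow 4 x).div_const 4)).congr_deriv (by norm_num)

lemma hasDerivAt_H_snd (x y : ℝ) : HasDerivAt (fun t => H x t) y y :=
  ((((hasDerivAt_pow 2 y).div_const 2).add_const (x ^ 2 / 2)).add_const (x ^ 4 / 4)).congr_deriv
    (by norm_num)

noncomputable def i9Primitive (k : ℕ) (x h : ℝ) : ℝ :=
  x^(k+1) * (4 * h^2/((k : ℝ)+1) - 4 * h/((k : ℝ)+3) * x^2
    + (1 - 2 * h)/((k : ℝ)+5) * x^4 + 1/((k : ℝ)+7) * x^6 + 1/(4*((k : ℝ)+9)) * x^8)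

noncomputable def i9Cofactor (k : ℕ) (x h : ℝ) : ℝ :=
  8 * h/((k : ℝ)+1) * x^(k+1) - 4/((k : ℝ)+3) * x^(k+3) - 2/((k : ℝ)+5) * x^(k+5)

lemma hasDerivAt_i9Primitive_comp (k : ℕ) {u v : ℝ → ℝ} {u' v' t : ℝ}
    (hu : HasDerivAt u u' t) (hv : HasDerivAt v v' t) :
    HasDerivAt (fun s => i9Primitive k (u s) (v s))
      (u t ^ k * (2 * v t - u t ^ 2 - u t ^ 4 / 2) ^ 2 * u' + i9Cofactor k (u t) (v t) * v') t := by
  have h := (hu.pow (k + 1)).mul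
    (((((hv.pow 2).const_mul 4).div_const ((k : ℝ) + 1)).sub
      (((hv.const_mul 4).div_const ((k : ℝ) + 3)).mul (hu.pow 2))).add
      ((((hv.const_mul 2).const_sub 1).div_const ((k : ℝ) + 5)).mul (hu.pow 4)) |>.add
      ((hu.pow 6).const_mul (1 / ((k : ℝ) + 7))) |>.add
      ((hu.pow 8).const_mul (1 / (4 * ((k : ℝ) + 9)))))
  refine h.congr_deriv ?_
  simp only [i9Cofactor, Pi.add_apply, Pi.sub_apply, Pi.mul_apply, Pi.pow_apply, Nat.add_sub_cancel]
  push_cast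
  field_simp
  ring

/-- (i9):  xᵏy⁴ dx = −(8H/(k+1)·xᵏ⁺¹ − 4/(k+3)·xᵏ⁺³ − 2/(k+5)·xᵏ⁺⁵)·dH
    + d( xᵏ⁺¹·(4H²/(k+1) − 4H/(k+3)·x² + (1−2H)/(k+5)·x⁴ + 1/(k+7)·x⁶ + 1/(4(k+9))·x⁸) ) -/
theorem decomposition_i9 (k : ℕ) : ∀ x y : ℝ,
    x^k * y^4 = - (8 * H x y/((k : ℝ)+1) * x^(k+1) - 4/((k : ℝ)+3) * x^(k+3)
        - 2/((k : ℝ)+5) * x^(k+5)) * pdx H x y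
      + pdx (fun x y => x^(k+1) * (4 * (H x y)^2/((k : ℝ)+1) - 4 * H x y/((k : ℝ)+3) * x^2
          + (1 - 2 * H x y)/((k : ℝ)+5) * x^4 + 1/((k : ℝ)+7) * x^6
          + 1/(4*((k : ℝ)+9)) * x^8)) x y
  ∧ (0 : ℝ) = - (8 * H x y/((k : ℝ)+1) * x^(k+1) - 4/((k : ℝ)+3) * x^(k+3)
        - 2/((k : ℝ)+5) * x^(k+5)) * pdy H x y
      + pdy (fun x y => x^(k+1) * (4 * (H x y)^2/((k : ℝ)+1) - 4 * H x y/((k : ℝ)+3) * x^2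
          + (1 - 2 * H x y)/((k : ℝ)+5) * x^4 + 1/((k : ℝ)+7) * x^6
          + 1/(4*((k : ℝ)+9)) * x^8)) x y := by
  intro x y
  have hx := hasDerivAt_i9Primitive_comp k (hasDerivAt_id x) (hasDerivAt_H_fst x y)
  have hy := hasDerivAt_i9Primitive_comp k (hasDerivAt_const y x) (hasDerivAt_H_snd x y)
  have hy2 : 2 * H x y - x ^ 2 - x ^ 4 / 2 = y ^ 2 := by unfold H; ring
  simp only [i9Primitive, id] at hx hy
  simp only [pdx, pdy, hx.deriv, hy.deriv, (hasDerivAt_H_fst x y).deriv,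
    (hasDerivAt_H_snd x y).deriv, hy2, i9Cofactor]
  constructor <;> ring
end

section
/- Let H(x,y) = y²/2 + x²/2 + x⁴/4. Then (−3xy)·(−3xy·dH + d(xy³)) = (8x²y² − 4H·x² − x² − y²)·dH + dR for some polynomial R(x,y), where H is substituted by its polynomial expression. -/
/-- evaluation at (x,y) of the partial derivative ∂R/∂x of a real polynomial R(x,y) -/
noncomputable def Rx (R : MvPolynomial (Fin 2) ℝ) (x y : ℝ) : ℝ :=
  MvPolynomial.eval ![x, y] (MvPolynomial.pderiv 0 R)

/-- evaluation at (x,y) of the partial derivative ∂R/∂y of a real polynomial R(x,y) -/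
noncomputable def Ry (R : MvPolynomial (Fin 2) ℝ) (x y : ℝ) : ℝ :=
  MvPolynomial.eval ![x, y] (MvPolynomial.pderiv 1 R)

open MvPolynomial in
noncomputable def myR : MvPolynomial (Fin 2) ℝ :=
  C (-3/2) * X 0 ^ 2 * X 1 ^ 4 + X 0 ^ 4 * X 1 ^ 2 + C (1/2) * X 0 ^ 6 * X 1 ^ 2
  + C (1/2) * X 0 ^ 2 * X 1 ^ 2 + C (1/4) * X 1 ^ 4 + C (1/2) * X 0 ^ 6
  + C (3/8) * X 0 ^ 8 + C (1/10) * X 0 ^ 10 + C (1/4) * X 0 ^ 4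

/-- Lemma 1(a): (−3xy)·(−3xy·dH + d(xy³)) = (8x²y² − 4Hx² − x² − y²)·dH + dR -/
theorem rel_exact : ∃ R : MvPolynomial (Fin 2) ℝ, ∀ x y : ℝ,
    (-3*x*y) * ((-3*x*y) * pdx H x y + pdx (fun x y => x * y^3) x y)
      = (8*x^2*y^2 - 4 * H x y * x^2 - x^2 - y^2) * pdx H x y + Rx R x y
  ∧ (-3*x*y) * ((-3*x*y) * pdy H x y + pdy (fun x y => x * y^3) x y)
      = (8*x^2*y^2 - 4 * H x y * x^2 - x^2 - y^2) * pdy H x y + Ry R x y := by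
  refine ⟨myR, fun x y => ?_⟩
  have hHx : pdx H x y = x + x^3 := by
    have h : HasDerivAt (fun t : ℝ => y^2/2 + t^2/2 + t^4/4) (x + x^3) x := by
      have := (((hasDerivAt_pow 2 x).div_const 2).const_add (y^2/2)).add
        ((hasDerivAt_pow 4 x).div_const 4)
      refine this.congr_deriv ?_
      norm_num
    simpa [pdx, H] using h.deriv
  have hHy : pdy H x y = y := by
    simp [pdy, H]
  have h1 : pdx (fun x y => x * y^3) x y = y^3 := by
    simp [pdx]
  have h2 : pdy (fun x y => x * y^3) x y = 3*x*y^2 := by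
    simp [pdy]
    ring
  have hRx : Rx myR x y = 4*x^3*y^2 + 3*x^5*y^2 - 3*x*y^4 + 3*x^5 + 3*x^7 + x^9 + x^3 + x*y^2 := by
    simp [Rx, myR, MvPolynomial.pderiv_X, Pi.single_apply]
    ring
  have hRy : Ry myR x y = -6*x^2*y^3 + 2*x^4*y + x^6*y + x^2*y + y^3 := by
    simp [Ry, myR, MvPolynomial.pderiv_X, Pi.single_apply]
    ring
  rw [hHx, hHy, h1, h2, hRx, hRy, H]
  constructor <;> ring
end

section
/- In the local ring R = K{λ₁,λ₂} of convergent power series at the origin (K = ℝ or ℂ), let b₁ = λ₁² + λ₁²λ₂² + λ₁λ₂³ + λ₂⁴ and b₂ = λ₂³ + λ₁⁴ + λ₁³λ₂. Then the ideal (b₁, b₂) equals the ideal (λ₁², λ₂³) in R. -/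
open MvPowerSeries in
/-- In the local ring of power series in two variables `λ₁, λ₂` over a field
(such as ℝ or ℂ), the ideal generated by `b₁ = λ₁² + λ₁²λ₂² + λ₁λ₂³ + λ₂⁴` and
`b₂ = λ₂³ + λ₁⁴ + λ₁³λ₂` equals the ideal `(λ₁², λ₂³)`. -/
theorem bautin_example {K : Type*} [Field K] :
    Ideal.span ({(X 0)^2 + (X 0)^2 * (X 1)^2 + (X 0) * (X 1)^3 + (X 1)^4,
        (X 1)^3 + (X 0)^4 + (X 0)^3 * (X 1)} : Set (MvPowerSeries (Fin 2) K))
      = Ideal.span ({(X 0)^2, (X 1)^3} : Set (MvPowerSeries (Fin 2) K)) := by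
  set x : MvPowerSeries (Fin 2) K := X 0 with hx
  set y : MvPowerSeries (Fin 2) K := X 1 with hy
  set d : MvPowerSeries (Fin 2) K := 1 + y^2 - x^3 - 2*x^2*y - x*y^2 with hdd
  have hd : IsUnit d := by
    rw [MvPowerSeries.isUnit_iff_constantCoeff]
    simp [hdd, hx, hy]
  obtain ⟨e, he⟩ := hd
  have hinv : (↑e⁻¹ : MvPowerSeries (Fin 2) K) * d = 1 := by
    rw [← he]; exact e.inv_mul
  apply le_antisymm <;> rw [Ideal.span_le] <;>
    rintro z (rfl | rfl) <;> rw [SetLike.mem_coe, Ideal.mem_span_pair]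
  · exact ⟨1 + y^2, x + y, by ring⟩
  · exact ⟨x^2 + x*y, 1, by ring⟩
  · exact ⟨(↑e⁻¹ : MvPowerSeries (Fin 2) K), -(↑e⁻¹ * (x + y)),
      by linear_combination x^2 * hinv⟩
  · exact ⟨-(↑e⁻¹ * (x^2 + x*y)), (↑e⁻¹ : MvPowerSeries (Fin 2) K) * (1 + y^2),
      by linear_combination y^3 * hinv⟩
end
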